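/- Let α ∈ (1,2) and let (M_n)_{n≥1} be the GEM weights of the Poisson–Dirichlet(1/α, 1 − 1/α) distribution as in the context. Then there exists a constant C > 0 such that for all integers k ≥ 1, the second moment satisfies E[M_k²] ≤ C·k^{−2α}. -/

import Mathlib

/-!
Writing `m_k = E[M_k²]`, independence gives `m_k = E[Z_k²] ∏_{i<k} E[(1 - Z_i)²]`, and the Beta
second moments make the ratio telescope: with `b_k = kβ + θ` one has `a + b_{k+1} = b_k + 1` for
`a = 1 - β`, whence `m_{k+1} = m_k · b_k / (b_k + 2)`. Since `1 + t ≤ eᵗ`,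
`b / (b + 2) ≤ ((b + 2) / (b + 2 + β))^(2/β)`, so `m_k (b_k + 2)^(2/β)` is non-increasing, and
`m_k ≲ (b_k + 2)^(-2/β) ≲ k^(-2α)`.
-/

open MeasureTheory ProbabilityTheory Finset

/-- The Beta distribution on `[0,1]` with parameters `a, b`, defined via its density
`x^(a-1) (1-x)^(b-1) / B(a,b)` with respect to Lebesgue measure on `[0,1]`,
where `B(a,b) = Γ(a)Γ(b)/Γ(a+b)`. -/
noncomputable def betaMeasure (a b : ℝ) : Measure ℝ :=
  (volume.restrict (Set.Icc (0 : ℝ) 1)).withDensity fun x =>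
    ENNReal.ofReal (x ^ (a - 1) * (1 - x) ^ (b - 1) /
      (Real.Gamma a * Real.Gamma b / Real.Gamma (a + b)))

theorem integral_Ioo_rpow_mul_one_sub_rpow {a b : ℝ} (ha : 0 < a) (hb : 0 < b) :
    ∫ x in Set.Ioo (0 : ℝ) 1, x ^ (a - 1) * (1 - x) ^ (b - 1) = beta a b := by
  have h : Complex.betaIntegral a b = ↑(∫ x in (0 : ℝ)..1, x ^ (a - 1) * (1 - x) ^ (b - 1)) := by
    rw [Complex.betaIntegral, ← intervalIntegral.integral_ofReal]
    refine intervalIntegral.integral_congr fun x hx => ?_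
    rw [Set.uIcc_of_le zero_le_one] at hx
    push_cast [Complex.ofReal_cpow hx.1, Complex.ofReal_cpow (sub_nonneg.2 hx.2)]
    rfl
  rw [beta_eq_betaIntegralReal a b ha hb, h, Complex.ofReal_re,
    intervalIntegral.integral_of_le zero_le_one, integral_Ioc_eq_integral_Ioo]

theorem integral_betaMeasure {a b : ℝ} (ha : 0 < a) (hb : 0 < b) (g : ℝ → ℝ) :
    ∫ x, g x ∂_root_.betaMeasure a b
      = ∫ x in Set.Ioo (0 : ℝ) 1, x ^ (a - 1) * (1 - x) ^ (b - 1) / beta a b * g x := by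
  rw [_root_.betaMeasure, integral_withDensity_eq_integral_toReal_smul (by fun_prop)
    (ae_of_all _ fun _ => ENNReal.ofReal_lt_top), integral_Icc_eq_integral_Ioo]
  refine setIntegral_congr_fun measurableSet_Ioo fun x hx => ?_
  have hdens : 0 ≤ x ^ (a - 1) * (1 - x) ^ (b - 1) / beta a b :=
    div_nonneg
      (mul_nonneg (Real.rpow_nonneg hx.1.le _) (Real.rpow_nonneg (sub_nonneg.2 hx.2.le) _))
      (beta_pos ha hb).le
  rw [← beta, ENNReal.toReal_ofReal hdens, smul_eq_mul]

theorem integral_pow_mul_one_sub_pow_betaMeasure {a b : ℝ} (ha : 0 < a) (hb : 0 < b) (m n : ℕ) :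
    ∫ x, x ^ m * (1 - x) ^ n ∂_root_.betaMeasure a b = beta (a + m) (b + n) / beta a b := by
  rw [integral_betaMeasure ha hb,
    ← integral_Ioo_rpow_mul_one_sub_rpow (a := a + m) (b := b + n) (by positivity) (by positivity),
    ← integral_div]
  refine setIntegral_congr_fun measurableSet_Ioo fun x ⟨hx0, hx1⟩ => ?_
  rw [add_sub_right_comm a, add_sub_right_comm b, Real.rpow_add_natCast hx0.ne',
    Real.rpow_add_natCast (sub_pos.2 hx1).ne']
  ring

theorem Real.Gamma_add_two {s : ℝ} (h0 : s ≠ 0) (h1 : s + 1 ≠ 0) :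
    Real.Gamma (s + 2) = s * (s + 1) * Real.Gamma s := by
  rw [show s + 2 = s + 1 + 1 by ring, Real.Gamma_add_one h1, Real.Gamma_add_one h0]
  ring

theorem ProbabilityTheory.beta_comm (a b : ℝ) : beta a b = beta b a := by
  rw [beta, beta, mul_comm, add_comm]

theorem ProbabilityTheory.beta_add_two_left_div {a b : ℝ} (ha : 0 < a) (hb : 0 < b) :
    beta (a + 2) b / beta a b = a * (a + 1) / ((a + b) * (a + b + 1)) := by
  have hGa := Real.Gamma_pos_of_pos ha
  have hGb := Real.Gamma_pos_of_pos hb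
  have hGab := Real.Gamma_pos_of_pos (add_pos ha hb)
  rw [beta, beta, add_right_comm, Real.Gamma_add_two ha.ne' (by positivity),
    Real.Gamma_add_two (by positivity) (by positivity)]
  field_simp

theorem integral_sq_betaMeasure {a b : ℝ} (ha : 0 < a) (hb : 0 < b) :
    ∫ x, x ^ 2 ∂_root_.betaMeasure a b = a * (a + 1) / ((a + b) * (a + b + 1)) := by
  simpa [beta_add_two_left_div ha hb] using integral_pow_mul_one_sub_pow_betaMeasure ha hb 2 0

theorem integral_one_sub_sq_betaMeasure {a b : ℝ} (ha : 0 < a) (hb : 0 < b) :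
    ∫ x, (1 - x) ^ 2 ∂_root_.betaMeasure a b = b * (b + 1) / ((a + b) * (a + b + 1)) := by
  have hmoment := integral_pow_mul_one_sub_pow_betaMeasure ha hb 0 2
  simp only [pow_zero, one_mul, CharP.cast_eq_zero, add_zero, Nat.cast_ofNat] at hmoment
  rw [hmoment, beta_comm, beta_comm a, beta_add_two_left_div hb ha, add_comm b a]

theorem div_add_le_rpow_div_add {x p c : ℝ} (hx : 0 < x) (hp : 0 < p) (hc : 0 < c) :
    x / (x + p) ≤ ((x + p) / (x + p + c)) ^ (p / c) := by
  have hxp : 0 < x + p := by positivity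
  calc x / (x + p) = 1 + -(p / (x + p)) := by field_simp; ring
    _ ≤ Real.exp (-(p / (x + p))) := Real.add_one_le_exp _ |>.trans_eq' (add_comm _ _)
    _ = Real.exp (c / (x + p)) ^ (-(p / c)) := by rw [← Real.exp_mul]; field_simp
    _ ≤ (1 + c / (x + p)) ^ (-(p / c)) :=
        Real.rpow_le_rpow_of_nonpos (by positivity)
          (by linarith [Real.add_one_le_exp (c / (x + p))]) (by simp only [neg_nonpos]; positivity)
    _ = ((x + p) / (x + p + c)) ^ (p / c) := by
        rw [Real.rpow_neg (by positivity), ← Real.inv_rpow (by positivity)]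
        congr 1
        field_simp

theorem exists_le_mul_rpow_neg_of_succ_eq {β : ℝ} (hβ : 0 < β) (hβ3 : β ≤ 3) {u : ℕ → ℝ}
    (hu0 : 0 < u 0) (hu : ∀ n : ℕ, u (n + 1) = u n * ((n * β + 1) / (n * β + 3))) :
    ∃ C, 0 < C ∧ ∀ n : ℕ, u n ≤ C * ((n : ℝ) + 1) ^ (-(2 / β)) := by
  have hu_nonneg : ∀ n, 0 ≤ u n := by
    intro n
    induction n with
    | zero => exact hu0.le
    | succ n ih => rw [hu]; positivity
  let w : ℕ → ℝ := fun n => u n * (n * β + 3) ^ (2 / β)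
  have hw : Antitone w := antitone_nat_of_succ_le fun n => by
    have hstep := div_add_le_rpow_div_add (x := n * β + 1) (p := 2) (c := β) (by positivity)
      two_pos hβ
    rw [show (n : ℝ) * β + 1 + 2 = n * β + 3 by ring,
      show (n : ℝ) * β + 3 + β = (n + 1) * β + 3 by ring] at hstep
    simp only [w, hu, mul_assoc]
    push_cast
    refine mul_le_mul_of_nonneg_left ?_ (hu_nonneg n)
    calc (n * β + 1) / (n * β + 3) * ((n + 1) * β + 3) ^ (2 / β)
        ≤ ((n * β + 3) / ((n + 1) * β + 3)) ^ (2 / β) * ((n + 1) * β + 3) ^ (2 / β) := by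
          gcongr
      _ = (n * β + 3) ^ (2 / β) := by
          rw [← Real.mul_rpow (by positivity) (by positivity), div_mul_cancel₀ _ (by positivity)]
  refine ⟨w 0 * β ^ (-(2 / β)), by positivity, fun n => ?_⟩
  have hdecay : u n ≤ w 0 * (n * β + 3) ^ (-(2 / β)) := by
    rw [Real.rpow_neg (by positivity), ← div_eq_mul_inv, le_div_iff₀ (by positivity)]
    exact hw (Nat.zero_le n)
  calc u n ≤ w 0 * (n * β + 3) ^ (-(2 / β)) := hdecay
    _ ≤ w 0 * (β * (n + 1)) ^ (-(2 / β)) := by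
        refine mul_le_mul_of_nonneg_left (Real.rpow_le_rpow_of_nonpos (by positivity) (by nlinarith)
          (by simp only [neg_nonpos]; positivity)) (by positivity)
    _ = w 0 * β ^ (-(2 / β)) * ((n : ℝ) + 1) ^ (-(2 / β)) := by
        rw [Real.mul_rpow hβ.le (by positivity)]
        ring

theorem ProbabilityTheory.iIndepFun.integral_finset_prod_comp {Ω ι : Type*} [MeasurableSpace Ω]
    {μ : Measure Ω} {X : ι → Ω → ℝ} (hX : iIndepFun X μ) (mX : ∀ i, AEMeasurable (X i) μ)
    {f : ι → ℝ → ℝ} (hf : ∀ i, AEStronglyMeasurable (f i) (μ.map (X i))) (s : Finset ι) :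
    ∫ ω, ∏ i ∈ s, f i (X i ω) ∂μ = ∏ i ∈ s, ∫ ω, f i (X i ω) ∂μ := by
  have hXs : iIndepFun (fun i : s => X i) μ := hX.precomp Subtype.val_injective
  simp_rw [← Finset.prod_coe_sort s]
  exact hXs.integral_fun_prod_comp (f := fun (i : s) => f i) (fun i => mX i) (fun i => hf i)

/-- Indexed from `1` as in the paper; `stickBreaking Z 0 = Z 0` carries no meaning. -/
def stickBreaking {Ω : Type*} (Z : ℕ → Ω → ℝ) (n : ℕ) (ω : Ω) : ℝ :=
  (∏ i ∈ Ico 1 n, (1 - Z i ω)) * Z n ω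

section StickBreaking

variable {Ω : Type*} [MeasurableSpace Ω] {P : Measure Ω} {Z : ℕ → Ω → ℝ}

theorem integral_stickBreaking_sq (hindep : iIndepFun Z P) (hmeas : ∀ n, Measurable (Z n))
    (k : ℕ) :
    ∫ ω, stickBreaking Z k ω ^ 2 ∂P
      = (∏ i ∈ Ico 1 k, ∫ ω, (1 - Z i ω) ^ 2 ∂P) * ∫ ω, Z k ω ^ 2 ∂P := by
  classical
  let f : ℕ → ℝ → ℝ := fun i x => if i = k then x ^ 2 else (1 - x) ^ 2
  have hk : k ∉ Ico 1 k := by simp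
  have hf : ∀ i, Measurable (f i) := fun i => by
    by_cases h : i = k <;> simp only [f, h, if_true, if_false] <;> fun_prop
  have hoff : ∀ i ∈ Ico 1 k, ∀ x, f i x = (1 - x) ^ 2 := fun i hi x =>
    if_neg (ne_of_mem_of_not_mem hi hk)
  calc ∫ ω, stickBreaking Z k ω ^ 2 ∂P = ∫ ω, ∏ i ∈ insert k (Ico 1 k), f i (Z i ω) ∂P := by
        refine integral_congr_ae (ae_of_all _ fun ω => ?_)
        dsimp only
        rw [prod_insert hk, prod_congr rfl fun i hi => hoff i hi (Z i ω), stickBreaking, mul_pow,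
          prod_pow, mul_comm]
        simp [f]
    _ = _ := by
        rw [hindep.integral_finset_prod_comp (fun i => (hmeas i).aemeasurable)
          (fun i => (hf i).aestronglyMeasurable), prod_insert hk,
          prod_congr rfl fun i hi => integral_congr_ae (ae_of_all _ fun ω => hoff i hi (Z i ω))]
        simp [f, mul_comm]

theorem integral_sq_of_map_eq_betaMeasure {Y : Ω → ℝ} (hY : Measurable Y) {a b : ℝ}
    (ha : 0 < a) (hb : 0 < b) (hlaw : P.map Y = _root_.betaMeasure a b) :
    ∫ ω, Y ω ^ 2 ∂P = a * (a + 1) / ((a + b) * (a + b + 1)) := by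
  rw [← integral_sq_betaMeasure ha hb, ← hlaw, integral_map hY.aemeasurable (by fun_prop)]

theorem integral_one_sub_sq_of_map_eq_betaMeasure {Y : Ω → ℝ} (hY : Measurable Y) {a b : ℝ}
    (ha : 0 < a) (hb : 0 < b) (hlaw : P.map Y = _root_.betaMeasure a b) :
    ∫ ω, (1 - Y ω) ^ 2 ∂P = b * (b + 1) / ((a + b) * (a + b + 1)) := by
  rw [← integral_one_sub_sq_betaMeasure ha hb, ← hlaw, integral_map hY.aemeasurable (by fun_prop)]

theorem integral_stickBreaking_sq_succ (hindep : iIndepFun Z P) (hmeas : ∀ n, Measurable (Z n))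
    {a : ℝ} {b : ℕ → ℝ} (ha : 0 < a) (hb : ∀ n, 1 ≤ n → 0 < b n)
    (hab : ∀ n, a + b (n + 1) = b n + 1)
    (hdist : ∀ n, 1 ≤ n → P.map (Z n) = _root_.betaMeasure a (b n)) {k : ℕ} (hk : 1 ≤ k) :
    ∫ ω, stickBreaking Z (k + 1) ω ^ 2 ∂P
      = (∫ ω, stickBreaking Z k ω ^ 2 ∂P) * (b k / (b k + 2)) := by
  have hk1 : 1 ≤ k + 1 := by omega
  have hbk := hb k hk
  rw [integral_stickBreaking_sq hindep hmeas, integral_stickBreaking_sq hindep hmeas,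
    prod_Ico_succ_top hk,
    integral_one_sub_sq_of_map_eq_betaMeasure (hmeas k) ha hbk (hdist k hk),
    integral_sq_of_map_eq_betaMeasure (hmeas k) ha hbk (hdist k hk),
    integral_sq_of_map_eq_betaMeasure (hmeas (k + 1)) ha (hb _ hk1) (hdist _ hk1), hab k]
  field_simp
  ring

end StickBreaking

theorem gem_second_moment_upper_general
    {Ω : Type*} [MeasurableSpace Ω] (P : Measure Ω)
    (α : ℝ) (hα1 : 1 < α)
    (Z : ℕ → Ω → ℝ) (hmeas : ∀ n, Measurable (Z n))
    (hindep : iIndepFun Z P)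
    (hdist : ∀ n : ℕ, 1 ≤ n →
      P.map (Z n) = _root_.betaMeasure (1 - α⁻¹) ((n : ℝ) * α⁻¹ + (1 - α⁻¹)))
    (M : ℕ → Ω → ℝ)
    (hM : ∀ n ω, M n ω = (∏ i ∈ Finset.Ico 1 n, (1 - Z i ω)) * Z n ω) :
    ∃ C : ℝ, 0 < C ∧ ∀ k : ℕ, 1 ≤ k →
      ∫ ω, (M k ω) ^ 2 ∂P ≤ C * (k : ℝ) ^ (-(2 * α)) := by
  obtain rfl : M = stickBreaking Z := funext₂ hM
  have hβ : 0 < α⁻¹ := by positivity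
  have ha : 0 < 1 - α⁻¹ := sub_pos.2 (inv_lt_one_of_one_lt₀ hα1)
  have hfirst : 0 < ∫ ω, stickBreaking Z 1 ω ^ 2 ∂P := by
    simp only [stickBreaking, Ico_self, prod_empty, one_mul]
    rw [integral_sq_of_map_eq_betaMeasure (hmeas 1) ha (by positivity) (hdist 1 le_rfl)]
    positivity
  have hsucc (n : ℕ) := integral_stickBreaking_sq_succ hindep hmeas ha
    (fun n _ => by positivity) (fun n => by push_cast; ring) hdist (Nat.le_add_left 1 n)
  obtain ⟨C, hC, hbound⟩ := exists_le_mul_rpow_neg_of_succ_eq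
    (u := fun n => ∫ ω, stickBreaking Z (n + 1) ω ^ 2 ∂P) hβ (by linarith) hfirst
    fun n => by rw [hsucc]; push_cast; ring
  refine ⟨C, hC, fun k hk => ?_⟩
  obtain ⟨n, rfl⟩ := Nat.exists_eq_add_of_le' hk
  simpa [div_inv_eq_mul] using hbound n

/-- For the GEM weights `(M_k)` of the Poisson–Dirichlet `(1/α, 1 − 1/α)` distribution,
`α ∈ (1,2)`, there is a constant `C > 0` with `E[M_k²] ≤ C k^{−2α}` for all `k ≥ 1`. -/
theorem gem_second_moment_upper
    {Ω : Type*} [MeasurableSpace Ω] (P : Measure Ω) [IsProbabilityMeasure P]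
    (α : ℝ) (hα1 : 1 < α) (hα2 : α < 2)
    (Z : ℕ → Ω → ℝ) (hmeas : ∀ n, Measurable (Z n))
    (hindep : iIndepFun Z P)
    (hdist : ∀ n : ℕ, 1 ≤ n →
      P.map (Z n) = _root_.betaMeasure (1 - α⁻¹) ((n : ℝ) * α⁻¹ + (1 - α⁻¹)))
    (M : ℕ → Ω → ℝ)
    (hM : ∀ n ω, M n ω = (∏ i ∈ Finset.Ico 1 n, (1 - Z i ω)) * Z n ω) :
    ∃ C : ℝ, 0 < C ∧ ∀ k : ℕ, 1 ≤ k →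
      ∫ ω, (M k ω) ^ 2 ∂P ≤ C * (k : ℝ) ^ (-(2 * α)) :=
  gem_second_moment_upper_general P α hα1 Z hmeas hindep hdist M hM
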